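/- Let B ⊆ A be a regular inclusion of C*-algebras, N a *-semigroup of normalizers with dense span in A, and E : A → B a faithful N-invariant conditional expectation. If K is an N-invariant regular ideal of B, then J_K := {a ∈ A : E(a*a) ∈ K} is a regular ideal of A satisfying J_K ∩ B = K = E(J_K) and (J_K)^⊥ = J_{K^{⊥_B}}. -/

import Mathlib

/-- Two-sided annihilator of a subset of an algebra. -/
def ann {A : Type*} [NonUnitalNonAssocSemiring A] (X : Set A) : Set A :=
  {a | ∀ x ∈ X, a * x = 0 ∧ x * a = 0}

/-- A (not necessarily closed) two-sided ideal, as a subset. -/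
def IsAlgIdeal {A : Type*} [NonUnitalNonAssocSemiring A] (J : Set A) : Prop :=
  (0 : A) ∈ J ∧ (∀ x ∈ J, ∀ y ∈ J, x + y ∈ J) ∧ ∀ a : A, ∀ x ∈ J, a * x ∈ J ∧ x * a ∈ J

/-- A closed two-sided ideal. -/
def IsIdeal {A : Type*} [NonUnitalNormedRing A] (J : Set A) : Prop :=
  IsAlgIdeal J ∧ IsClosed J

/-- A regular ideal: a closed two-sided ideal equal to its double annihilator. -/
def IsRegularIdeal {A : Type*} [NonUnitalNormedRing A] (J : Set A) : Prop :=
  IsIdeal J ∧ J = ann (ann J)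

variable {A : Type*} [NonUnitalNormedRing A] [StarRing A] [CStarRing A] [CompleteSpace A]
  [NormedSpace ℂ A] [IsScalarTower ℂ A A] [SMulCommClass ℂ A A] [StarModule ℂ A]
  [PartialOrder A] [StarOrderedRing A]

/-- `B` is a (non-unital, closed, star-closed) C*-subalgebra of `A`. -/
def IsCStarSubalgebra (B : Set A) : Prop :=
  (0 : A) ∈ B ∧ (∀ x ∈ B, ∀ y ∈ B, x + y ∈ B) ∧ (∀ x ∈ B, ∀ y ∈ B, x * y ∈ B) ∧
  (∀ (c : ℂ), ∀ x ∈ B, c • x ∈ B) ∧ (∀ x ∈ B, star x ∈ B) ∧ IsClosed B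

/-- `B` contains an approximate unit for `A`. -/
def ContainsApproxUnit (B : Set A) : Prop :=
  ∀ a : A, ∀ ε > (0 : ℝ), ∃ b ∈ B, ‖b‖ ≤ 1 ∧ ‖a - b * a‖ < ε ∧ ‖a - a * b‖ < ε

/-- `B ⊆ A` is an inclusion of C*-algebras: a C*-subalgebra containing an
approximate unit for `A`. -/
def IsCStarInclusion (B : Set A) : Prop :=
  IsCStarSubalgebra B ∧ ContainsApproxUnit B

/-- `n` is a normalizer of `B` in `A`: `nBn* ⊆ B` and `n*Bn ⊆ B`. -/
def IsNormalizer (B : Set A) (n : A) : Prop :=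
  (∀ b ∈ B, n * b * star n ∈ B) ∧ (∀ b ∈ B, star n * b * n ∈ B)

/-- `B ⊆ A` is a regular inclusion: an inclusion whose normalizers span a dense
subspace of `A`. -/
def IsRegularInclusion (B : Set A) : Prop :=
  IsCStarInclusion B ∧
  closure (Submodule.span ℂ {n | IsNormalizer B n} : Set A) = Set.univ

/-- `E : A → A` is a conditional expectation onto `B`. -/
def IsCondExp (B : Set A) (E : A → A) : Prop :=
  (∀ a, E a ∈ B) ∧ (∀ b ∈ B, E b = b) ∧
  (∀ x y, E (x + y) = E x + E y) ∧ (∀ (c : ℂ) (x : A), E (c • x) = c • E x) ∧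
  (∀ a : A, 0 ≤ a → 0 ≤ E a) ∧ (∀ a, ‖E a‖ ≤ ‖a‖) ∧
  (∀ b ∈ B, ∀ a, E (b * a) = b * E a ∧ E (a * b) = E a * b)

/-- Faithfulness of a positive map: `E(a*a) = 0 → a = 0`. -/
def IsFaithful (E : A → A) : Prop := ∀ a, E (star a * a) = 0 → a = 0

/-- `N` is a `*`-semigroup of normalizers of `B` with dense linear span in `A`. -/
def IsNormalizerSemigroup (B N : Set A) : Prop :=
  (∀ n ∈ N, IsNormalizer B n) ∧ (∀ n ∈ N, star n ∈ N) ∧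
  (∀ m ∈ N, ∀ n ∈ N, m * n ∈ N) ∧
  closure (Submodule.span ℂ N : Set A) = Set.univ

/-- `K` is invariant under `N`: `nKn* ⊆ K` for all `n ∈ N`. -/
def InvariantUnder (N K : Set A) : Prop := ∀ n ∈ N, ∀ k ∈ K, n * k * star n ∈ K

/-- `E` is `N`-invariant: `E(nan*) = nE(a)n*` for all `n ∈ N`. -/
def IsInvariantCondExp (N : Set A) (E : A → A) : Prop :=
  ∀ n ∈ N, ∀ a : A, E (n * a * star n) = n * E a * star n

/-- A closed two-sided ideal of the subalgebra `B`. -/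
def IsIdealIn (B K : Set A) : Prop :=
  K ⊆ B ∧ (0 : A) ∈ K ∧ (∀ x ∈ K, ∀ y ∈ K, x + y ∈ K) ∧
  (∀ b ∈ B, ∀ x ∈ K, b * x ∈ K ∧ x * b ∈ K) ∧ IsClosed K

/-- A regular ideal of the subalgebra `B`: `K = K^{⊥_B ⊥_B}` with annihilators
computed inside `B`. -/
def IsRegularIdealIn (B K : Set A) : Prop :=
  IsIdealIn B K ∧ K = ann (ann K ∩ B) ∩ B

/-- `B ⊆ A` has the ideal intersection property. -/
def HasIIP (B : Set A) : Prop :=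
  ∀ J : Set A, IsIdeal J → J ≠ {0} → ∃ x ∈ J ∩ B, x ≠ 0

/-- `B ⊆ A` has the regular ideal intersection property. -/
def HasRIIP (B : Set A) : Prop :=
  ∀ J : Set A, IsRegularIdeal J → J ≠ {0} → ∃ x ∈ J ∩ B, x ≠ 0


/-!
The regular ideal `K` of `B` is hereditary (`0 ≤ a ≤ b ∈ K` with `a ∈ B` forces `a ∈ K`) and
contains every `b ∈ B` with `b⋆b ∈ K`: by `K = K^{⊥⊥}` both reduce to showing that products with
elements of `K^⊥` vanish, which the C⋆-identity detects. Together with the Kadison–Schwarz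
inequality `E(x)⋆E(x) ≤ E(x⋆x)` and the operator inequalities `(x+y)⋆(x+y) ≤ 2(x⋆x + y⋆y)` and
`(ax)⋆(ax) ≤ ‖a⋆a‖ x⋆x`, this makes `J_K` a closed left ideal with `E(J_K) = K` and
`J_K ∩ B = K`. It is a right ideal because `E(n⋆x⋆xn) = n⋆E(x⋆x)n ∈ K` for `n ∈ N` and the span
of `N` is dense. As `E` is faithful and `K ∩ K^⊥ = 0`, we get `J_K ∩ J_{K^⊥} = 0`, whence
`(J_K)^⊥ = J_{K^{⊥_B}}`; since `K^{⊥_B}` is again an `N`-invariant regular ideal of `B`,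
applying this twice gives `(J_K)^{⊥⊥} = J_K`.
-/

open scoped ComplexStarModule

lemma zero_mem_ann {R : Type*} [NonUnitalNonAssocSemiring R] (X : Set R) : (0 : R) ∈ ann X :=
  fun x _ => ⟨zero_mul x, mul_zero x⟩

lemma add_mem_ann {R : Type*} [NonUnitalNonAssocSemiring R] {X : Set R} {a b : R}
    (ha : a ∈ ann X) (hb : b ∈ ann X) : a + b ∈ ann X := fun x hx =>
  ⟨by rw [add_mul, (ha x hx).1, (hb x hx).1, add_zero],
   by rw [mul_add, (ha x hx).2, (hb x hx).2, add_zero]⟩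

lemma smul_mem_ann {S R : Type*} [NonUnitalNonAssocSemiring R] [SMulZeroClass S R]
    [IsScalarTower S R R] [SMulCommClass S R R] {X : Set R} {a : R} (c : S) (ha : a ∈ ann X) :
    c • a ∈ ann X := fun x hx =>
  ⟨by rw [smul_mul_assoc, (ha x hx).1, smul_zero], by rw [mul_smul_comm, (ha x hx).2, smul_zero]⟩

lemma isClosed_ann {R : Type*} [NonUnitalNonAssocSemiring R] [TopologicalSpace R]
    [ContinuousMul R] [T2Space R] (X : Set R) : IsClosed (ann X) := by
  simp only [ann, Set.ofPred_forall, Set.ofPred_and]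
  exact isClosed_iInter fun x => isClosed_iInter fun _ =>
    (isClosed_eq (continuous_mul_const x) continuous_const).inter
      (isClosed_eq (continuous_const_mul x) continuous_const)

section CStarRing

variable {R : Type*} [NonUnitalNormedRing R] [StarRing R] [CStarRing R]

lemma mul_eq_zero_of_star_mul_self_mul_eq_zero {b c : R} (h : star b * b * c = 0) :
    b * c = 0 := by
  rw [← CStarRing.star_mul_self_eq_zero_iff, star_mul, mul_assoc, ← mul_assoc (star b), h,
    mul_zero]

lemma mul_eq_zero_of_mul_mul_self_star_eq_zero {b c : R} (h : c * (b * star b) = 0) :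
    c * b = 0 := by
  rw [← CStarRing.mul_star_self_eq_zero_iff, star_mul, mul_assoc, ← mul_assoc b, ← mul_assoc, h,
    zero_mul]

end CStarRing

section Subalgebra

variable {R : Type*} [NonUnitalNormedRing R] [StarRing R] [NormedSpace ℂ R] {B : Set R}

lemma IsCStarSubalgebra.zero_mem (hB : IsCStarSubalgebra B) : (0 : R) ∈ B := hB.1

lemma IsCStarSubalgebra.isClosed (hB : IsCStarSubalgebra B) : IsClosed B := hB.2.2.2.2.2

lemma IsCStarSubalgebra.add_mem (hB : IsCStarSubalgebra B) {x y : R} (hx : x ∈ B) (hy : y ∈ B) :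
    x + y ∈ B := hB.2.1 x hx y hy

lemma IsCStarSubalgebra.mul_mem (hB : IsCStarSubalgebra B) {x y : R} (hx : x ∈ B) (hy : y ∈ B) :
    x * y ∈ B := hB.2.2.1 x hx y hy

lemma IsCStarSubalgebra.smul_mem (hB : IsCStarSubalgebra B) (c : ℂ) {x : R} (hx : x ∈ B) :
    c • x ∈ B := hB.2.2.2.1 c x hx

lemma IsCStarSubalgebra.star_mem (hB : IsCStarSubalgebra B) {x : R} (hx : x ∈ B) :
    star x ∈ B := hB.2.2.2.2.1 x hx

end Subalgebra

section IdealIn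

variable {R : Type*} [NonUnitalNormedRing R] {B K : Set R}

lemma IsIdealIn.mul_mem_left (hK : IsIdealIn B K) {b x : R} (hb : b ∈ B) (hx : x ∈ K) :
    b * x ∈ K := (hK.2.2.2.1 b hb x hx).1

lemma IsIdealIn.mul_mem_right (hK : IsIdealIn B K) {b x : R} (hb : b ∈ B) (hx : x ∈ K) :
    x * b ∈ K := (hK.2.2.2.1 b hb x hx).2

lemma IsIdealIn.zero_mem (hK : IsIdealIn B K) : (0 : R) ∈ K := hK.2.1

lemma IsIdealIn.add_mem (hK : IsIdealIn B K) {x y : R} (hx : x ∈ K) (hy : y ∈ K) : x + y ∈ K :=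
  hK.2.2.1 x hx y hy

lemma IsIdealIn.isClosed (hK : IsIdealIn B K) : IsClosed K := hK.2.2.2.2

end IdealIn

section CondExp

variable {R : Type*} [NonUnitalNormedRing R] [NormedSpace ℂ R] [PartialOrder R]
  {B : Set R} {E : R → R}

lemma IsCondExp.mem (hE : IsCondExp B E) (a : R) : E a ∈ B := hE.1 a

lemma IsCondExp.map_of_mem (hE : IsCondExp B E) {b : R} (hb : b ∈ B) : E b = b := hE.2.1 b hb

lemma IsCondExp.map_add (hE : IsCondExp B E) (x y : R) : E (x + y) = E x + E y := hE.2.2.1 x y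

lemma IsCondExp.map_smul (hE : IsCondExp B E) (c : ℂ) (x : R) : E (c • x) = c • E x :=
  hE.2.2.2.1 c x

lemma IsCondExp.map_nonneg (hE : IsCondExp B E) {a : R} (ha : 0 ≤ a) : 0 ≤ E a :=
  hE.2.2.2.2.1 a ha

lemma IsCondExp.map_mul_left (hE : IsCondExp B E) {b : R} (hb : b ∈ B) (a : R) :
    E (b * a) = b * E a := (hE.2.2.2.2.2.2 b hb a).1

lemma IsCondExp.map_mul_right (hE : IsCondExp B E) {b : R} (hb : b ∈ B) (a : R) :
    E (a * b) = E a * b := (hE.2.2.2.2.2.2 b hb a).2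

end CondExp

/-- The paper's `J_K`. -/
def inducedIdeal {R : Type*} [Mul R] [Star R] (E : R → R) (K : Set R) : Set R :=
  {a | E (star a * a) ∈ K}

section CStarAlgebra

variable {C : Type*} [NonUnitalCStarAlgebra C] {B K N : Set C}

lemma IsRegularIdealIn.smul_mem (hB : IsCStarSubalgebra B) (hK : IsRegularIdealIn B K) (c : ℂ)
    {x : C} (hx : x ∈ K) : c • x ∈ K := by
  rw [hK.2] at hx ⊢
  exact ⟨smul_mem_ann c hx.1, hB.smul_mem c hx.2⟩

lemma IsRegularIdealIn.mem_of_star_mul_self_mem (hK : IsRegularIdealIn B K) {b : C} (hb : b ∈ B)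
    (h : star b * b ∈ K) : b ∈ K := by
  rw [hK.2]
  refine ⟨fun l ⟨hl, _⟩ => ⟨mul_eq_zero_of_star_mul_self_mul_eq_zero (hl _ h).2, ?_⟩, hb⟩
  have hlb : l * b * (star b * star (star b)) = 0 := by
    rw [star_star, mul_assoc]
    exact (hl _ (hK.1.mul_mem_left hb h)).1
  have hlbb : l * (b * star b) = 0 := by
    rw [← mul_assoc]
    exact mul_eq_zero_of_mul_mul_self_star_eq_zero hlb
  exact mul_eq_zero_of_mul_mul_self_star_eq_zero hlbb

lemma IsRegularIdealIn.ann_inter (hB : IsCStarSubalgebra B) (hK : IsRegularIdealIn B K) :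
    IsRegularIdealIn B (ann K ∩ B) := by
  refine ⟨⟨Set.inter_subset_right, ⟨zero_mem_ann K, hB.zero_mem⟩, ?_, ?_,
    (isClosed_ann K).inter hB.isClosed⟩, by rw [← hK.2]⟩
  · rintro x ⟨hx, hxB⟩ y ⟨hy, hyB⟩
    exact ⟨add_mem_ann hx hy, hB.add_mem hxB hyB⟩
  · rintro b hb x ⟨hx, hxB⟩
    refine ⟨⟨fun k hk => ⟨?_, ?_⟩, hB.mul_mem hb hxB⟩, ⟨fun k hk => ⟨?_, ?_⟩, hB.mul_mem hxB hb⟩⟩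
    · rw [mul_assoc, (hx k hk).1, mul_zero]
    · rw [← mul_assoc]; exact (hx _ (hK.1.mul_mem_right hb hk)).2
    · rw [mul_assoc]; exact (hx _ (hK.1.mul_mem_left hb hk)).1
    · rw [← mul_assoc, (hx k hk).2, zero_mul]

lemma InvariantUnder.ann_inter (hB : IsCStarSubalgebra B) (hN : IsNormalizerSemigroup B N)
    (hK : IsIdealIn B K) (hKinv : InvariantUnder N K) : InvariantUnder N (ann K ∩ B) := by
  rintro n hn l ⟨hl, hlB⟩
  have hconj : ∀ k ∈ K, l * (star n * k * n) = 0 ∧ star n * k * n * l = 0 := fun k hk =>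
    hl _ (by simpa only [star_star] using hKinv (star n) (hN.2.1 n hn) k hk)
  refine ⟨fun k hk => ⟨?_, ?_⟩, (hN.1 n hn).1 l hlB⟩
  · have hlnk : l * star n * k = 0 := by
      rw [← CStarRing.mul_star_self_eq_zero_iff]
      calc l * star n * k * star (l * star n * k) = l * (star n * (k * star k) * n) * star l := by
            simp only [star_mul, star_star]; noncomm_ring
        _ = 0 := by rw [(hconj _ (hK.mul_mem_right (hB.star_mem (hK.1 hk)) hk)).1, zero_mul]
    rw [mul_assoc n, mul_assoc n, hlnk, mul_zero]
  · have hknl : k * n * l = 0 := by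
      rw [← CStarRing.star_mul_self_eq_zero_iff]
      calc star (k * n * l) * (k * n * l) = star l * (star n * (star k * k) * n * l) := by
            simp only [star_mul]; noncomm_ring
        _ = 0 := by rw [(hconj _ (hK.mul_mem_left (hB.star_mem (hK.1 hk)) hk)).2, mul_zero]
    rw [← mul_assoc, ← mul_assoc, hknl, zero_mul]

variable [PartialOrder C] {E : C → C}

lemma smul_mem_inducedIdeal (hB : IsCStarSubalgebra B) (hE : IsCondExp B E)
    (hK : IsRegularIdealIn B K) (c : ℂ) {x : C} (hx : x ∈ inducedIdeal E K) :
    c • x ∈ inducedIdeal E K := by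
  show E (star (c • x) * (c • x)) ∈ K
  rw [star_smul, smul_mul_assoc, mul_smul_comm, smul_smul, hE.map_smul]
  exact hK.smul_mem hB _ hx

lemma subset_inducedIdeal (hB : IsCStarSubalgebra B) (hE : IsCondExp B E) (hK : IsIdealIn B K) :
    K ⊆ inducedIdeal E K := fun k hk => by
  have hkk : star k * k ∈ K := hK.mul_mem_left (hB.star_mem (hK.1 hk)) hk
  show E (star k * k) ∈ K
  rwa [hE.map_of_mem (hK.1 hkk)]

lemma inducedIdeal_inter (hB : IsCStarSubalgebra B) (hE : IsCondExp B E)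
    (hK : IsRegularIdealIn B K) : inducedIdeal E K ∩ B = K := by
  refine Set.Subset.antisymm (fun x ⟨hxJ, hxB⟩ => hK.mem_of_star_mul_self_mem hxB ?_)
    fun k hk => ⟨subset_inducedIdeal hB hE hK.1 hk, hK.1.1 hk⟩
  have hEx : E (star x * x) = star x * x := hE.map_of_mem (hB.mul_mem (hB.star_mem hxB) hxB)
  rwa [inducedIdeal, Set.mem_ofPred, hEx] at hxJ

variable [StarOrderedRing C]

lemma mul_eq_zero_of_le_of_mul_eq_zero {a b c : C} (ha : 0 ≤ a) (hab : a ≤ b) (h : b * c = 0) :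
    a * c = 0 := by
  have hconj : star c * a * c = 0 := by
    refine le_antisymm ?_ (star_left_conjugate_nonneg ha c)
    simpa only [mul_assoc, h, mul_zero] using star_left_conjugate_le_conjugate hab c
  have hsc : CFC.sqrt a * c = 0 := by
    rw [← CStarRing.star_mul_self_eq_zero_iff, star_mul, (CFC.sqrt_nonneg a).isSelfAdjoint.star_eq,
      mul_assoc, ← mul_assoc (CFC.sqrt a), CFC.sqrt_mul_sqrt_self a, ← mul_assoc, hconj]
  rw [← CFC.sqrt_mul_sqrt_self a, mul_assoc, hsc, mul_zero]

lemma mul_eq_zero_of_le_of_mul_eq_zero' {a b c : C} (ha : 0 ≤ a) (hab : a ≤ b) (h : c * b = 0) :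
    c * a = 0 := by
  have hb : star b = b := (ha.trans hab).isSelfAdjoint.star_eq
  have hac : a * star c = 0 :=
    mul_eq_zero_of_le_of_mul_eq_zero ha hab (by rw [← hb, ← star_mul, h, star_zero])
  simpa only [star_mul, star_star, ha.isSelfAdjoint.star_eq, star_zero] using congrArg star hac

lemma IsRegularIdealIn.mem_of_nonneg_of_le (hK : IsRegularIdealIn B K) {a b : C} (haB : a ∈ B)
    (ha : 0 ≤ a) (hab : a ≤ b) (hb : b ∈ K) : a ∈ K := by
  rw [hK.2]
  exact ⟨fun l ⟨hl, _⟩ => ⟨mul_eq_zero_of_le_of_mul_eq_zero ha hab (hl b hb).2,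
    mul_eq_zero_of_le_of_mul_eq_zero' ha hab (hl b hb).1⟩, haB⟩

def IsCondExp.toPositiveLinearMap (hE : IsCondExp B E) : C →ₚ[ℂ] C :=
  .mk₀ { toFun := E, map_add' := hE.map_add, map_smul' := hE.map_smul } fun _ => hE.map_nonneg

lemma IsCondExp.map_zero (hE : IsCondExp B E) : E 0 = 0 := _root_.map_zero hE.toPositiveLinearMap

lemma IsCondExp.map_sub (hE : IsCondExp B E) (x y : C) : E (x - y) = E x - E y :=
  _root_.map_sub hE.toPositiveLinearMap x y

lemma IsCondExp.mono (hE : IsCondExp B E) : Monotone E := OrderHomClass.mono hE.toPositiveLinearMap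

lemma IsCondExp.continuous (hE : IsCondExp B E) : Continuous E :=
  map_continuous hE.toPositiveLinearMap

lemma IsCondExp.map_star (hE : IsCondExp B E) (x : C) : E (star x) = star (E x) := by
  have hre : IsSelfAdjoint (E (ℜ x)) := (ℜ x).prop.map' hE.toPositiveLinearMap
  have him : IsSelfAdjoint (E (ℑ x)) := (ℑ x).prop.map' hE.toPositiveLinearMap
  conv_lhs => rw [← realPart_add_I_smul_imaginaryPart x]
  conv_rhs => rw [← realPart_add_I_smul_imaginaryPart x]
  rw [star_add, star_smul, (ℜ x).prop.star_eq, (ℑ x).prop.star_eq, hE.map_add, hE.map_add,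
    hE.map_smul, hE.map_smul, star_add, star_smul, hre.star_eq, him.star_eq]

lemma IsCondExp.star_mul_self_le (hB : IsCStarSubalgebra B) (hE : IsCondExp B E) (x : C) :
    star (E x) * E x ≤ E (star x * x) := by
  set b := E x
  have hb : b ∈ B := hE.mem x
  have hexpand : star (x - b) * (x - b) = star x * x - star x * b - (star b * x - star b * b) := by
    rw [star_sub]; noncomm_ring
  have hE_expand : E (star (x - b) * (x - b)) = E (star x * x) - star b * b := by
    rw [hexpand, hE.map_sub, hE.map_sub, hE.map_sub, hE.map_mul_right hb,
      hE.map_mul_left (hB.star_mem hb), hE.map_of_mem (hB.mul_mem (hB.star_mem hb) hb),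
      hE.map_star]
    abel
  exact sub_nonneg.mp (hE_expand ▸ hE.map_nonneg (star_mul_self_nonneg _))

lemma zero_mem_inducedIdeal (hE : IsCondExp B E) (hK : IsIdealIn B K) :
    (0 : C) ∈ inducedIdeal E K := by
  show E (star 0 * 0) ∈ K
  rw [mul_zero, hE.map_zero]
  exact hK.zero_mem

lemma add_mem_inducedIdeal (hE : IsCondExp B E) (hK : IsRegularIdealIn B K) {x y : C}
    (hx : x ∈ inducedIdeal E K) (hy : y ∈ inducedIdeal E K) : x + y ∈ inducedIdeal E K := by
  set s := (star x * x + star y * y) + (star x * x + star y * y)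
  have hle : star (x + y) * (x + y) ≤ s := by
    rw [← sub_nonneg]
    convert star_mul_self_nonneg (x - y) using 1
    simp only [s, star_add, star_sub]
    noncomm_ring
  have hs : E s ∈ K := by
    simp only [s, hE.map_add]
    exact hK.1.add_mem (hK.1.add_mem hx hy) (hK.1.add_mem hx hy)
  exact hK.mem_of_nonneg_of_le (hE.mem _) (hE.map_nonneg (star_mul_self_nonneg _)) (hE.mono hle) hs

def inducedSubmodule (hB : IsCStarSubalgebra B) (hE : IsCondExp B E)
    (hK : IsRegularIdealIn B K) : Submodule ℂ C where
  carrier := inducedIdeal E K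
  zero_mem' := zero_mem_inducedIdeal hE hK.1
  add_mem' := add_mem_inducedIdeal hE hK
  smul_mem' := smul_mem_inducedIdeal hB hE hK

lemma isClosed_inducedIdeal (hE : IsCondExp B E) (hK : IsClosed K) :
    IsClosed (inducedIdeal E K) :=
  hK.preimage (hE.continuous.comp (continuous_star.mul continuous_id))

lemma mul_mem_inducedIdeal_left (hB : IsCStarSubalgebra B) (hE : IsCondExp B E)
    (hK : IsRegularIdealIn B K) (a : C) {x : C} (hx : x ∈ inducedIdeal E K) :
    a * x ∈ inducedIdeal E K := by
  have hconj : star (a * x) * (a * x) = star x * (star a * a) * x := by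
    rw [star_mul]; noncomm_ring
  have hle : E (star (a * x) * (a * x)) ≤ E (((‖star a * a‖ : ℝ) : ℂ) • (star x * x)) := by
    rw [hconj, Complex.coe_smul]
    exact hE.mono CStarAlgebra.star_left_conjugate_le_norm_smul
  rw [hE.map_smul] at hle
  exact hK.mem_of_nonneg_of_le (hE.mem _) (hE.map_nonneg (star_mul_self_nonneg _)) hle
    (hK.smul_mem hB _ hx)

lemma mul_mem_inducedIdeal_right (hB : IsCStarSubalgebra B) (hN : IsNormalizerSemigroup B N)
    (hE : IsCondExp B E) (hEinv : IsInvariantCondExp N E) (hK : IsRegularIdealIn B K)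
    (hKinv : InvariantUnder N K) {x : C} (hx : x ∈ inducedIdeal E K) (a : C) :
    x * a ∈ inducedIdeal E K := by
  have hxN : N ⊆ {n | x * n ∈ inducedIdeal E K} := fun n hn => by
    have hEn := hEinv (star n) (hN.2.1 n hn) (star x * x)
    have hKn := hKinv (star n) (hN.2.1 n hn) _ hx
    rw [star_star] at hEn hKn
    show E (star (x * n) * (x * n)) ∈ K
    rwa [star_mul, mul_assoc, ← mul_assoc (star x), ← mul_assoc, hEn]
  let S := (inducedSubmodule hB hE hK).comap (LinearMap.mulLeft ℂ x)
  have hS : IsClosed (S : Set C) :=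
    (isClosed_inducedIdeal hE hK.1.isClosed).preimage (continuous_const_mul x)
  exact closure_minimal (Submodule.span_le.mpr hxN) hS (hN.2.2.2 ▸ Set.mem_univ a)

lemma isIdeal_inducedIdeal (hB : IsCStarSubalgebra B) (hN : IsNormalizerSemigroup B N)
    (hE : IsCondExp B E) (hEinv : IsInvariantCondExp N E) (hK : IsRegularIdealIn B K)
    (hKinv : InvariantUnder N K) : IsIdeal (inducedIdeal E K) :=
  ⟨⟨zero_mem_inducedIdeal hE hK.1, fun _ hx _ hy => add_mem_inducedIdeal hE hK hx hy,
    fun a _ hx => ⟨mul_mem_inducedIdeal_left hB hE hK a hx,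
      mul_mem_inducedIdeal_right hB hN hE hEinv hK hKinv hx a⟩⟩,
    isClosed_inducedIdeal hE hK.1.isClosed⟩

lemma image_inducedIdeal (hB : IsCStarSubalgebra B) (hE : IsCondExp B E)
    (hK : IsRegularIdealIn B K) : E '' inducedIdeal E K = K := by
  refine Set.Subset.antisymm ?_
    fun k hk => ⟨k, subset_inducedIdeal hB hE hK.1 hk, hE.map_of_mem (hK.1.1 hk)⟩
  rintro _ ⟨x, hx, rfl⟩
  have hxB := hE.mem x
  exact hK.mem_of_star_mul_self_mem hxB <| hK.mem_of_nonneg_of_le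
    (hB.mul_mem (hB.star_mem hxB) hxB) (star_mul_self_nonneg _) (hE.star_mul_self_le hB x) hx

lemma eq_zero_of_mem_inducedIdeal_ann (hE : IsCondExp B E) (hEf : IsFaithful E) {y : C}
    (hyK : y ∈ inducedIdeal E K) (hyL : y ∈ inducedIdeal E (ann K ∩ B)) : y = 0 := by
  have hp := IsSelfAdjoint.of_nonneg (hE.map_nonneg (star_mul_self_nonneg y))
  apply hEf y
  rw [← CStarRing.star_mul_self_eq_zero_iff, hp.star_eq]
  exact (hyL.1 _ hyK).1

lemma ann_inducedIdeal (hB : IsCStarSubalgebra B) (hN : IsNormalizerSemigroup B N)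
    (hE : IsCondExp B E) (hEf : IsFaithful E) (hEinv : IsInvariantCondExp N E)
    (hK : IsRegularIdealIn B K) (hKinv : InvariantUnder N K) :
    ann (inducedIdeal E K) = inducedIdeal E (ann K ∩ B) := by
  have hL := hK.ann_inter hB
  have hLinv := hKinv.ann_inter hB hN hK.1
  refine Set.Subset.antisymm (fun a ha => ⟨fun k hk => ?_, hE.mem _⟩) fun a ha x hx =>
    ⟨eq_zero_of_mem_inducedIdeal_ann hE hEf (mul_mem_inducedIdeal_left hB hE hK a hx)
      (mul_mem_inducedIdeal_right hB hN hE hEinv hL hLinv ha x),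
    eq_zero_of_mem_inducedIdeal_ann hE hEf (mul_mem_inducedIdeal_right hB hN hE hEinv hK hKinv hx a)
      (mul_mem_inducedIdeal_left hB hE hL x ha)⟩
  have hkB := hK.1.1 hk
  have hak : a * k = 0 := (ha k (subset_inducedIdeal hB hE hK.1 hk)).1
  have hakk : a * (star k * k) = 0 :=
    (ha _ (subset_inducedIdeal hB hE hK.1 (hK.1.mul_mem_left (hB.star_mem hkB) hk))).1
  have hka : k * star a = 0 := mul_eq_zero_of_star_mul_self_mul_eq_zero <| by
    simpa only [star_mul, star_star, mul_assoc, star_zero] using congrArg star hakk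
  constructor
  · rw [← hE.map_mul_right hkB, mul_assoc, hak, mul_zero, hE.map_zero]
  · rw [← hE.map_mul_left hkB, ← mul_assoc, hka, zero_mul, hE.map_zero]

end CStarAlgebra

/-- If `K` is an `N`-invariant regular ideal of `B`, then
`J_K = {a ∈ A : E(a*a) ∈ K}` is a regular ideal of `A` with
`J_K ∩ B = K = E(J_K)` and `(J_K)^⊥ = J_{K^{⊥_B}}`. -/
theorem JK_isRegularIdeal {B N : Set A} (hB : IsRegularInclusion B)
    (hN : IsNormalizerSemigroup B N) (E : A → A) (hE : IsCondExp B E)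
    (hEf : IsFaithful E) (hEinv : IsInvariantCondExp N E)
    (K : Set A) (hK : IsRegularIdealIn B K) (hKinv : InvariantUnder N K) :
    IsRegularIdeal {a : A | E (star a * a) ∈ K} ∧
    {a : A | E (star a * a) ∈ K} ∩ B = K ∧
    E '' {a : A | E (star a * a) ∈ K} = K ∧
    ann {a : A | E (star a * a) ∈ K} = {a : A | E (star a * a) ∈ ann K ∩ B} := by
  let _ : NonUnitalCStarAlgebra A := {}
  have hBsub : IsCStarSubalgebra B := hB.1.1
  have hann := ann_inducedIdeal hBsub hN hE hEf hEinv hK hKinv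
  refine ⟨⟨isIdeal_inducedIdeal hBsub hN hE hEinv hK hKinv, ?_⟩, inducedIdeal_inter hBsub hE hK,
    image_inducedIdeal hBsub hE hK, hann⟩
  calc inducedIdeal E K = inducedIdeal E (ann (ann K ∩ B) ∩ B) := by rw [← hK.2]
    _ = ann (ann (inducedIdeal E K)) := by
      rw [hann, ann_inducedIdeal hBsub hN hE hEf hEinv (hK.ann_inter hBsub)
        (hKinv.ann_inter hBsub hN hK.1)]
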